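/- Let D be a squarefree positive integer with D ≠ 3 (equivalently, √−D ∉ ℚ(ζ_6)). If a triple (t, r, q) of nonzero polynomials in ℚ[x] parameterizes a complete family of pairing-friendly elliptic curves with embedding degree k = 6 and CM discriminant D, then ρ(t, r, q) ≠ 1, i.e., deg q ≠ deg r. -/

import Mathlib

open Polynomial

/-!
Since `Φ₆(t - 1) = t² - 3t + 3` has degree `2 deg t`, while `4q = t² + Dy²` has degree at least
`2 deg t` (no cancellation of nonnegative leading coefficients), `deg q = deg r` forces `r` to be a
constant multiple of `t² - 3t + 3`. Reducing `4(q + 1 - t) = Dy² + (t - 2)²` modulo it gives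
`Dy² = A(t² - 3t + 3) + (t - 1)` for a constant `A`.
If `A = 0`, then `4q = t² + t - 1`, and at an integer value `q(a) = n` we get
`(2t(a) + 1)² = 16n + 5`, which is not a square. Otherwise leading coefficients give `A = Dm²`, and
`(2At + 1 - 3A)² - (2Dmy)² = (1 - 3A)(1 + A)`. A nonzero constant on the right would make both
factors units, hence `t` constant; so `A = 1/3`, `3D` is a square and `D = 3`.
-/

/-- `f ∈ ℚ[x]` represents integers: there is an integer `a` with `f(a) ∈ ℤ`. -/
def RepresentsIntegers (f : ℚ[X]) : Prop :=
  ∃ a n : ℤ, f.eval (a : ℚ) = (n : ℚ)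

/-- `f ∈ ℚ[x]` represents primes: `f` is nonconstant, irreducible over `ℚ`,
has positive leading coefficient, represents integers, and no prime number
divides every integer value `f(a)` with `a ∈ ℤ`, `f(a) ∈ ℤ`. -/
def RepresentsPrimes (f : ℚ[X]) : Prop :=
  0 < f.natDegree ∧ Irreducible f ∧ 0 < f.leadingCoeff ∧ RepresentsIntegers f ∧
    ∀ p : ℕ, p.Prime → ∃ a n : ℤ, f.eval (a : ℚ) = (n : ℚ) ∧ ¬ (p : ℤ) ∣ n

/-- `(t, r, q)` parameterizes a complete family of pairing-friendly elliptic curves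
with embedding degree `k` and CM discriminant `D`:
(i) `r` represents primes; (ii) `q` represents primes; (iii) `r ∣ q + 1 - t`;
(iv) `r ∣ Φ_k(t - 1)`; (v) `D·y² = 4q - t²` for some `y ∈ ℚ[x]`. -/
def IsCompleteFamily (k D : ℕ) (t r q : ℚ[X]) : Prop :=
  t ≠ 0 ∧ r ≠ 0 ∧ q ≠ 0 ∧
  RepresentsPrimes r ∧ RepresentsPrimes q ∧
  r ∣ (q + 1 - t) ∧
  r ∣ (cyclotomic k ℚ).comp (t - 1) ∧
  ∃ y : ℚ[X], (D : ℚ[X]) * y ^ 2 = 4 * q - t ^ 2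

theorem Int.not_isSquare_eight_mul_add_five (n : ℤ) : ¬ IsSquare (8 * n + 5) := by
  rintro ⟨z, hz⟩
  have h8 := congrArg (Int.cast : ℤ → ZMod 8) hz
  push_cast at h8
  rw [show (8 : ZMod 8) = 0 from rfl, zero_mul, zero_add] at h8
  generalize (z : ZMod 8) = w at h8
  revert w
  decide

theorem Nat.Prime.eq_of_squarefree_of_isSquare_mul {p D : ℕ} (hp : p.Prime) (hD : Squarefree D)
    (h : IsSquare (p * D)) : D = p := by
  obtain ⟨k, hk⟩ := h
  obtain ⟨j, rfl⟩ : p ∣ k := (hp.dvd_mul.mp (hk ▸ dvd_mul_right p D)).elim id id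
  have hDj : D = p * (j * j) := Nat.eq_of_mul_eq_mul_left hp.pos (by rw [hk]; ring)
  rw [hDj, Nat.isUnit_iff.mp (hD j ⟨p, by rw [hDj]; ring⟩), mul_one, mul_one]

namespace Polynomial

theorem natDegree_add_eq_max_of_leadingCoeff_nonneg {R : Type*} [Semiring R] [LinearOrder R]
    [IsStrictOrderedRing R] {p q : R[X]} (hp : 0 ≤ p.leadingCoeff) (hq : 0 ≤ q.leadingCoeff) :
    (p + q).natDegree = max p.natDegree q.natDegree := by
  rcases eq_or_ne p 0 with rfl | hp0
  · simp
  rcases eq_or_ne q 0 with rfl | hq0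
  · simp
  have hlc : 0 < p.leadingCoeff + q.leadingCoeff :=
    add_pos_of_pos_of_nonneg (hp.lt_of_ne' (leadingCoeff_ne_zero.mpr hp0)) hq
  have hdeg := degree_add_eq_of_leadingCoeff_add_ne_zero hlc.ne'
  rw [degree_eq_natDegree hp0, degree_eq_natDegree hq0] at hdeg
  exact natDegree_eq_of_degree_eq_some (by rw [hdeg]; norm_cast)

theorem exists_eq_C_mul_of_dvd_of_natDegree_le {R : Type*} [CommSemiring R] [NoZeroDivisors R]
    {p f : R[X]} (hp : p ≠ 0) (h : p ∣ f) (hdeg : f.natDegree ≤ p.natDegree) :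
    ∃ c : R, f = C c * p := by
  obtain ⟨u, rfl⟩ := h
  rcases eq_or_ne u 0 with rfl | hu
  · exact ⟨0, by simp⟩
  rw [natDegree_mul hp hu] at hdeg
  exact ⟨u.coeff 0, by rw [mul_comm, ← eq_C_of_natDegree_eq_zero (by omega)]⟩

theorem natDegree_eq_zero_of_sq_sub_sq_eq_C {K : Type*} [Field K] [NeZero (2 : K)]
    {f g : K[X]} {c : K} (hc : c ≠ 0) (h : f ^ 2 - g ^ 2 = C c) : f.natDegree = 0 := by
  have hunit : IsUnit ((f - g) * (f + g)) := by
    rw [show (f - g) * (f + g) = C c by rw [← h]; ring]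
    exact isUnit_C.mpr hc.isUnit
  obtain ⟨a, -, ha⟩ := Polynomial.isUnit_iff.mp (isUnit_of_mul_isUnit_left hunit)
  obtain ⟨b, -, hb⟩ := Polynomial.isUnit_iff.mp (isUnit_of_mul_isUnit_right hunit)
  have h2f : C 2 * f = C (a + b) := by
    rw [C_add, ha, hb, map_ofNat]
    ring
  rw [← natDegree_C_mul (two_ne_zero (α := K)), h2f, natDegree_C]

section SixthCyclotomic

variable {R : Type*} [CommRing R]

theorem cyclotomic_six_comp_sub_one (t : R[X]) :
    (cyclotomic 6 R).comp (t - 1) = t ^ 2 - 3 * t + 3 := by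
  simp only [cyclotomic_six, add_comp, sub_comp, pow_comp, X_comp, one_comp]
  ring

theorem natDegree_sq_sub_three_mul_add_three [IsDomain R] (t : R[X]) :
    (t ^ 2 - 3 * t + 3).natDegree = 2 * t.natDegree := by
  rw [← cyclotomic_six_comp_sub_one, natDegree_comp, natDegree_cyclotomic, ← C_1,
    natDegree_sub_C]
  rfl

theorem leadingCoeff_sq_sub_three_mul_add_three [IsDomain R] {t : R[X]}
    (ht : 0 < t.natDegree) : (t ^ 2 - 3 * t + 3).leadingCoeff = t.leadingCoeff ^ 2 := by
  have ht1 : (t - 1).natDegree ≠ 0 := by rw [← C_1, natDegree_sub_C]; exact ht.ne'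
  rw [← cyclotomic_six_comp_sub_one, leadingCoeff_comp ht1, (cyclotomic.monic 6 R).leadingCoeff,
    natDegree_cyclotomic, one_mul,
    leadingCoeff_sub_of_degree_lt (by rwa [degree_one, ← natDegree_pos_iff_degree_pos])]
  rfl

theorem sq_sub_three_mul_add_three_ne_zero [LinearOrder R] [IsStrictOrderedRing R] (t : R[X]) :
    t ^ 2 - 3 * t + 3 ≠ 0 := by
  intro h
  have hpos := cyclotomic_pos (by norm_num : 2 < 6) ((t - 1).eval 0)
  rw [← eval_comp, cyclotomic_six_comp_sub_one, h, eval_zero] at hpos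
  exact hpos.false

end SixthCyclotomic

section Family

variable {K : Type*} [Field K] {D A : K} {t r q y : K[X]}

theorem natDegree_pos_of_dvd_sq_sub_three_mul_add_three [LinearOrder K] [IsStrictOrderedRing K]
    (hr : 0 < r.natDegree) (h : r ∣ t ^ 2 - 3 * t + 3) : 0 < t.natDegree := by
  have := natDegree_le_of_dvd h (sq_sub_three_mul_add_three_ne_zero t)
  rw [natDegree_sq_sub_three_mul_add_three] at this
  omega

theorem exists_C_mul_sq_eq_C_mul_add_sub_one [LinearOrder K] [IsStrictOrderedRing K]
    (hD : 0 ≤ D) (hr : 0 < r.natDegree) (hdeg : q.natDegree = r.natDegree)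
    (hrq : r ∣ q + 1 - t) (hrP : r ∣ t ^ 2 - 3 * t + 3) (hy : C D * y ^ 2 = 4 * q - t ^ 2) :
    ∃ A : K, C D * y ^ 2 = C A * (t ^ 2 - 3 * t + 3) + (t - 1) := by
  set P := t ^ 2 - 3 * t + 3 with hP
  have hP0 : P ≠ 0 := sq_sub_three_mul_add_three_ne_zero t
  have hPdeg : P.natDegree = 2 * t.natDegree := natDegree_sq_sub_three_mul_add_three t
  have ht := natDegree_pos_of_dvd_sq_sub_three_mul_add_three hr hrP
  have hqdeg : q.natDegree = max (2 * t.natDegree) (C D * y ^ 2).natDegree := by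
    rw [← natDegree_C_mul (four_ne_zero (α := K)), map_ofNat, ← natDegree_pow,
      show 4 * q = t ^ 2 + C D * y ^ 2 by linear_combination -hy]
    exact natDegree_add_eq_max_of_leadingCoeff_nonneg (by simp [sq_nonneg])
      (by simpa using mul_nonneg hD (sq_nonneg y.leadingCoeff))
  have hrPdeg : r.natDegree ≤ P.natDegree := natDegree_le_of_dvd hrP hP0
  have hassoc : Associated r P := associated_of_dvd_of_natDegree_le hrP hP0 (by omega)
  have hdvd : P ∣ C D * y ^ 2 - (t - 1) := by
    rw [show C D * y ^ 2 - (t - 1) = 4 * (q + 1 - t) - P by rw [hP]; linear_combination hy]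
    exact dvd_sub (hassoc.dvd_iff_dvd_left.mp (dvd_mul_of_dvd_right hrq 4)) dvd_rfl
  have hdeg' : (C D * y ^ 2 - (t - 1)).natDegree ≤ P.natDegree := by
    refine (natDegree_sub_le _ _).trans (max_le (by omega) ?_)
    rw [← C_1, natDegree_sub_C]
    omega
  obtain ⟨A, hA⟩ := exists_eq_C_mul_of_dvd_of_natDegree_le hP0 hdvd hdeg'
  exact ⟨A, by linear_combination hA⟩

theorem exists_eq_mul_sq_of_C_mul_sq_eq (ht : 0 < t.natDegree) (hA : A ≠ 0)
    (h : C D * y ^ 2 = C A * (t ^ 2 - 3 * t + 3) + (t - 1)) : ∃ m : K, A = D * m ^ 2 := by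
  have hlt : (t - 1).degree < (C A * (t ^ 2 - 3 * t + 3)).degree := by
    apply degree_lt_degree
    rw [natDegree_C_mul hA, natDegree_sq_sub_three_mul_add_three, ← C_1, natDegree_sub_C]
    omega
  have hlc := congrArg leadingCoeff h
  rw [leadingCoeff_add_of_degree_lt' hlt, leadingCoeff_mul, leadingCoeff_mul,
    leadingCoeff_sq_sub_three_mul_add_three ht, leadingCoeff_C, leadingCoeff_C,
    leadingCoeff_pow] at hlc
  have hlct : t.leadingCoeff ≠ 0 := leadingCoeff_ne_zero.mpr (ne_zero_of_natDegree_gt ht)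
  exact ⟨y.leadingCoeff / t.leadingCoeff, by field_simp; linear_combination -hlc⟩

theorem natDegree_eq_zero_of_C_mul_sq_eq [NeZero (2 : K)] {m : K} (hA : A ≠ 0)
    (hΔ : (1 - 3 * A) * (1 + A) ≠ 0) (hm : A = D * m ^ 2)
    (h : C D * y ^ 2 = C A * (t ^ 2 - 3 * t + 3) + (t - 1)) : t.natDegree = 0 := by
  have hpell : (C (2 * A) * t + C (1 - 3 * A)) ^ 2 - (C (2 * D * m) * y) ^ 2
      = C ((1 - 3 * A) * (1 + A)) := by
    simp only [map_mul, map_sub, map_add, map_one, map_ofNat, hm, map_pow] at h ⊢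
    linear_combination (-4 * C D * C m ^ 2) * h
  have h2A : 2 * A ≠ 0 := mul_ne_zero two_ne_zero hA
  have := natDegree_eq_zero_of_sq_sub_sq_eq_C hΔ hpell
  rwa [natDegree_add_C, natDegree_C_mul h2A] at this

end Family

end Polynomial

theorem not_representsIntegers_of_four_mul_eq {t q : ℚ[X]} (h : 4 * q = t ^ 2 + t - 1) :
    ¬ RepresentsIntegers q := by
  rintro ⟨a, n, hn⟩
  have hval := congrArg (eval (a : ℚ)) h
  simp only [eval_mul, eval_add, eval_sub, eval_pow, eval_ofNat, eval_one, hn] at hval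
  apply Int.not_isSquare_eight_mul_add_five (2 * n)
  rw [← Rat.isSquare_intCast_iff]
  exact ⟨2 * t.eval (a : ℚ) + 1, by push_cast; linear_combination 4 * hval⟩

theorem no_ideal_family_k6_general (D : ℕ) (hD : Squarefree D) (hD3 : D ≠ 3)
    (t r q : ℚ[X]) (h : IsCompleteFamily 6 D t r q) :
    q.natDegree ≠ r.natDegree := by
  obtain ⟨-, -, -, hr, hq, hrq, hrΦ, y, hy⟩ := h
  rw [cyclotomic_six_comp_sub_one] at hrΦ
  rw [← C_eq_natCast] at hy
  intro hdeg
  have ht := natDegree_pos_of_dvd_sq_sub_three_mul_add_three hr.1 hrΦ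
  obtain ⟨A, hA⟩ :=
    exists_C_mul_sq_eq_C_mul_add_sub_one (Nat.cast_nonneg D) hr.1 hdeg hrq hrΦ hy
  rcases eq_or_ne A 0 with rfl | hA0
  · rw [map_zero, zero_mul, zero_add] at hA
    refine not_representsIntegers_of_four_mul_eq (t := t) ?_ hq.2.2.2.1
    linear_combination hA - hy
  obtain ⟨m, hm⟩ := exists_eq_mul_sq_of_C_mul_sq_eq ht hA0 hA
  by_cases hΔ : (1 - 3 * A) * (1 + A) = 0
  · have hA3 : 3 * (D * m ^ 2) = 1 := by
      have : 0 < 1 + A := by rw [hm]; positivity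
      linarith [(mul_eq_zero.mp hΔ).resolve_right this.ne']
    have hm0 : m ≠ 0 := by rintro rfl; norm_num at hA3
    refine hD3 (Nat.prime_three.eq_of_squarefree_of_isSquare_mul hD ?_)
    rw [← Rat.isSquare_natCast_iff]
    exact ⟨m⁻¹, by push_cast; field_simp; linear_combination hA3⟩
  · exact ht.ne' (natDegree_eq_zero_of_C_mul_sq_eq hA0 hΔ hm hA)

/-- No ideal complete family with embedding degree 6 when `√-D ∉ ℚ(ζ_6)`, i.e. `D ≠ 3`. -/
theorem no_ideal_family_k6 (D : ℕ) (hD : Squarefree D) (hDpos : 0 < D) (hD3 : D ≠ 3)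
    (t r q : ℚ[X]) (h : IsCompleteFamily 6 D t r q) :
    q.natDegree ≠ r.natDegree :=
  no_ideal_family_k6_general D hD hD3 t r q h
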